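/- Suppose A ≥ |B|E and s > Eᵀ|r| entrywise, and let p ∈ ℝⁿ with p ≥ 0 satisfy p = T(p). Consider the disturbance-free closed-loop trajectory x(0) = x₀ ≥ 0, u(t) = −K(p)x(t), x(t+1) = (A − B·K(p))x(t). Then x(t) → 0 as t → ∞ and the infinite-horizon cost satisfies Σ_{t=0}^{∞} [sᵀx(t) + rᵀu(t)] = pᵀx₀ (the series converges to pᵀx₀). -/
import Mathlib


open Matrix Filter

/-- The Bellman operator `T(p) = s + Aᵀp − Eᵀ|r + Bᵀp|`. -/
noncomputable def Tbell {n m : ℕ} (A : Matrix (Fin n) (Fin n) ℝ) (B : Matrix (Fin n) (Fin m) ℝ)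
    (E : Matrix (Fin m) (Fin n) ℝ) (s : Fin n → ℝ) (r : Fin m → ℝ) (p : Fin n → ℝ) :
    Fin n → ℝ :=
  s + Aᵀ.mulVec p - Eᵀ.mulVec fun i => |(r + Bᵀ.mulVec p) i|

/-- The optimal feedback gain `K(p)`: its `i`-th row is `sign(rᵢ + Bᵢᵀp) · Eᵢ`. -/
noncomputable def Kgain {n m : ℕ} (B : Matrix (Fin n) (Fin m) ℝ)
    (E : Matrix (Fin m) (Fin n) ℝ) (r : Fin m → ℝ) (p : Fin n → ℝ) :
    Matrix (Fin m) (Fin n) ℝ :=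
  Matrix.of fun i j => Real.sign ((r + Bᵀ.mulVec p) i) * E i j

lemma sign_mul_self' (y : ℝ) : Real.sign y * y = |y| := by
  rcases lt_trichotomy y 0 with h | h | h
  · rw [Real.sign_of_neg h, abs_of_neg h]; ring
  · simp [h]
  · rw [Real.sign_of_pos h, abs_of_pos h]; ring

lemma abs_sign_le_one' (y : ℝ) : |Real.sign y| ≤ 1 := by
  rcases lt_trichotomy y 0 with h | h | h
  · rw [Real.sign_of_neg h]; norm_num
  · simp [h]
  · rw [Real.sign_of_pos h]; norm_num

/-- If `A ≥ |B|E`, `s > Eᵀ|r|` entrywise, `p ≥ 0` and `p = T(p)`, then along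
the disturbance-free closed loop `x(0) = x₀ ≥ 0`, `u(t) = −K(p)x(t)`,
`x(t+1) = (A − B·K(p))x(t)`, one has `x(t) → 0` and
`Σ_{t=0}^{∞} [sᵀx(t) + rᵀu(t)] = pᵀx₀`. -/
theorem closed_loop_optimal_cost {n m : ℕ}
    (A : Matrix (Fin n) (Fin n) ℝ) (B : Matrix (Fin n) (Fin m) ℝ)
    (E : Matrix (Fin m) (Fin n) ℝ) (s : Fin n → ℝ) (r : Fin m → ℝ)
    (hE : ∀ i j, 0 ≤ E i j)
    (hA : ∀ i j, ((Matrix.of fun i j => |B i j|) * E) i j ≤ A i j)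
    (hs : ∀ j, Eᵀ.mulVec (fun i => |r i|) j < s j)
    (p : Fin n → ℝ) (hp : 0 ≤ p) (hfix : p = Tbell A B E s r p)
    (x₀ : Fin n → ℝ) (hx₀ : 0 ≤ x₀)
    (x : ℕ → Fin n → ℝ) (hx0 : x 0 = x₀)
    (hdyn : ∀ t, x (t + 1) = (A - B * Kgain B E r p).mulVec (x t)) :
    Tendsto x atTop (nhds 0) ∧
    Tendsto (fun N : ℕ => ∑ t ∈ Finset.range N,
        (s ⬝ᵥ x t + r ⬝ᵥ (-(Kgain B E r p).mulVec (x t)))) atTop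
      (nhds (p ⬝ᵥ x₀)) := by
  classical
  set K := Kgain B E r p with hKdef
  set M := A - B * K with hMdef
  have hKrow : ∀ i j, K i j = Real.sign ((r + Bᵀ.mulVec p) i) * E i j := by
    intro i j; rw [hKdef]; rfl
  have hKmul : ∀ (y : Fin n → ℝ) i,
      (K.mulVec y) i = Real.sign ((r + Bᵀ.mulVec p) i) * (E.mulVec y) i := by
    intro y i
    simp only [mulVec, dotProduct, hKrow, Finset.mul_sum, mul_assoc]
  -- B*K is dominated entrywise by |B|*E
  have hBK : ∀ j k, (B * K) j k ≤ ((Matrix.of fun i j => |B i j|) * E) j k := by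
    intro j k
    simp only [Matrix.mul_apply, hKrow, Matrix.of_apply]
    apply Finset.sum_le_sum
    intro i _
    calc B j i * (Real.sign ((r + Bᵀ.mulVec p) i) * E i k)
        = (B j i * Real.sign ((r + Bᵀ.mulVec p) i)) * E i k := by ring
      _ ≤ |B j i * Real.sign ((r + Bᵀ.mulVec p) i)| * E i k :=
          mul_le_mul_of_nonneg_right (le_abs_self _) (hE i k)
      _ = |B j i| * |Real.sign ((r + Bᵀ.mulVec p) i)| * E i k := by rw [abs_mul]
      _ ≤ |B j i| * 1 * E i k := by
          exact mul_le_mul_of_nonneg_right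
            (mul_le_mul_of_nonneg_left (abs_sign_le_one' _) (abs_nonneg _)) (hE i k)
      _ = |B j i| * E i k := by ring
  have hMnn : ∀ j k, 0 ≤ M j k := by
    intro j k
    have h1 := hA j k
    have h2 := hBK j k
    rw [hMdef]
    simp only [Matrix.sub_apply]
    linarith
  -- the state stays nonnegative
  have hxnn : ∀ t j, 0 ≤ x t j := by
    intro t
    induction t with
    | zero => intro j; rw [hx0]; exact hx₀ j
    | succ t ih =>
        intro j
        rw [hdyn t]
        simp only [mulVec, dotProduct]
        exact Finset.sum_nonneg fun k _ => mul_nonneg (hMnn j k) (ih k)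
  -- fixed point rearranged with the gain matrix
  have hfixM : p = (s - Kᵀ.mulVec r) + Mᵀ.mulVec p := by
    have h1 : Kᵀ.mulVec (r + Bᵀ.mulVec p)
        = Eᵀ.mulVec (fun i => |(r + Bᵀ.mulVec p) i|) := by
      funext j
      simp only [mulVec, dotProduct, transpose_apply, hKrow]
      refine Finset.sum_congr rfl fun i _ => ?_
      rw [← sign_mul_self' ((r + Bᵀ.mulVec p) i)]
      ring
    calc p = Tbell A B E s r p := hfix
      _ = s + Aᵀ.mulVec p - Kᵀ.mulVec (r + Bᵀ.mulVec p) := by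
          rw [show Tbell A B E s r p
              = s + Aᵀ.mulVec p - Eᵀ.mulVec (fun i => |(r + Bᵀ.mulVec p) i|) from rfl, h1]
      _ = s + Aᵀ.mulVec p - (Kᵀ.mulVec r + Kᵀ.mulVec (Bᵀ.mulVec p)) := by
          rw [mulVec_add]
      _ = s + Aᵀ.mulVec p - (Kᵀ.mulVec r + (B * K)ᵀ.mulVec p) := by
          rw [mulVec_mulVec, ← transpose_mul]
      _ = (s - Kᵀ.mulVec r) + Mᵀ.mulVec p := by
          rw [hMdef, transpose_sub, sub_mulVec]
          abel
  -- the per-stage cost telescopes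
  have hcost : ∀ t, s ⬝ᵥ x t + r ⬝ᵥ (-(K.mulVec (x t))) = p ⬝ᵥ x t - p ⬝ᵥ x (t + 1) := by
    intro t
    rw [hdyn t, dotProduct_neg]
    have h2 : p ⬝ᵥ M.mulVec (x t) = Mᵀ.mulVec p ⬝ᵥ x t := by
      rw [Matrix.dotProduct_mulVec, Matrix.mulVec_transpose]
    have h3 : r ⬝ᵥ K.mulVec (x t) = Kᵀ.mulVec r ⬝ᵥ x t := by
      rw [Matrix.dotProduct_mulVec, Matrix.mulVec_transpose]
    have h4 : ((s - Kᵀ.mulVec r) + Mᵀ.mulVec p) ⬝ᵥ x t = p ⬝ᵥ x t := by rw [← hfixM]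
    rw [add_dotProduct, sub_dotProduct] at h4
    rw [h2, h3]
    linarith
  have hsum : ∀ N, ∑ t ∈ Finset.range N, (s ⬝ᵥ x t + r ⬝ᵥ (-(K.mulVec (x t))))
      = p ⬝ᵥ x₀ - p ⬝ᵥ x N := by
    intro N
    calc ∑ t ∈ Finset.range N, (s ⬝ᵥ x t + r ⬝ᵥ (-(K.mulVec (x t))))
        = ∑ t ∈ Finset.range N, (p ⬝ᵥ x t - p ⬝ᵥ x (t + 1)) :=
          Finset.sum_congr rfl fun t _ => hcost t
      _ = p ⬝ᵥ x 0 - p ⬝ᵥ x N := Finset.sum_range_sub' (fun t => p ⬝ᵥ x t) N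
      _ = p ⬝ᵥ x₀ - p ⬝ᵥ x N := by rw [hx0]
  -- lower bound on the stage cost
  have hEx : ∀ t i, 0 ≤ (E.mulVec (x t)) i := by
    intro t i
    simp only [mulVec, dotProduct]
    exact Finset.sum_nonneg fun k _ => mul_nonneg (hE i k) (hxnn t k)
  have hrK : ∀ t, r ⬝ᵥ K.mulVec (x t) ≤ (fun i => |r i|) ⬝ᵥ E.mulVec (x t) := by
    intro t
    apply Finset.sum_le_sum
    intro i _
    rw [hKmul]
    calc r i * (Real.sign ((r + Bᵀ.mulVec p) i) * (E.mulVec (x t)) i)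
        = (r i * Real.sign ((r + Bᵀ.mulVec p) i)) * (E.mulVec (x t)) i := by ring
      _ ≤ |r i * Real.sign ((r + Bᵀ.mulVec p) i)| * (E.mulVec (x t)) i :=
          mul_le_mul_of_nonneg_right (le_abs_self _) (hEx t i)
      _ = |r i| * |Real.sign ((r + Bᵀ.mulVec p) i)| * (E.mulVec (x t)) i := by rw [abs_mul]
      _ ≤ |r i| * 1 * (E.mulVec (x t)) i :=
          mul_le_mul_of_nonneg_right
            (mul_le_mul_of_nonneg_left (abs_sign_le_one' _) (abs_nonneg _)) (hEx t i)
      _ = |r i| * (E.mulVec (x t)) i := by ring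
  have hEr : ∀ t, (fun i => |r i|) ⬝ᵥ E.mulVec (x t) = Eᵀ.mulVec (fun i => |r i|) ⬝ᵥ x t := by
    intro t
    rw [Matrix.dotProduct_mulVec, Matrix.mulVec_transpose]
  have h5 : ∀ t, (s - Eᵀ.mulVec (fun i => |r i|)) ⬝ᵥ x t
      ≤ s ⬝ᵥ x t - r ⬝ᵥ K.mulVec (x t) := by
    intro t
    rw [sub_dotProduct]
    have := hrK t
    rw [hEr t] at this
    linarith
  have hterm_nn : ∀ t k, 0 ≤ (s - Eᵀ.mulVec (fun i => |r i|)) k * x t k := by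
    intro t k
    refine mul_nonneg ?_ (hxnn t k)
    have := hs k
    simp only [Pi.sub_apply]
    linarith
  have hclow : ∀ t j, (s j - Eᵀ.mulVec (fun i => |r i|) j) * x t j
      ≤ s ⬝ᵥ x t + r ⬝ᵥ (-(K.mulVec (x t))) := by
    intro t j
    have h6 : (s - Eᵀ.mulVec (fun i => |r i|)) j * x t j
        ≤ (s - Eᵀ.mulVec (fun i => |r i|)) ⬝ᵥ x t :=
      Finset.single_le_sum (fun k _ => hterm_nn t k) (Finset.mem_univ j)
    rw [dotProduct_neg]
    simp only [Pi.sub_apply] at h6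
    linarith [h5 t, h6]
  have hcnn : ∀ t, 0 ≤ s ⬝ᵥ x t + r ⬝ᵥ (-(K.mulVec (x t))) := by
    intro t
    have h0 : 0 ≤ (s - Eᵀ.mulVec (fun i => |r i|)) ⬝ᵥ x t :=
      Finset.sum_nonneg fun k _ => hterm_nn t k
    rw [dotProduct_neg]
    linarith [h5 t]
  have hpx : ∀ N, 0 ≤ p ⬝ᵥ x N :=
    fun N => Finset.sum_nonneg fun j _ => mul_nonneg (hp j) (hxnn N j)
  have hSummable : Summable (fun t => s ⬝ᵥ x t + r ⬝ᵥ (-(K.mulVec (x t)))) :=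
    summable_of_sum_range_le hcnn (fun N => by rw [hsum N]; linarith [hpx N])
  have hczero : Tendsto (fun t => s ⬝ᵥ x t + r ⬝ᵥ (-(K.mulVec (x t)))) atTop (nhds 0) :=
    hSummable.tendsto_atTop_zero
  have hxj : ∀ j, Tendsto (fun t => x t j) atTop (nhds 0) := by
    intro j
    have hδ : 0 < s j - Eᵀ.mulVec (fun i => |r i|) j := by linarith [hs j]
    refine squeeze_zero (g := fun t => (s ⬝ᵥ x t + r ⬝ᵥ (-(K.mulVec (x t)))) /
        (s j - Eᵀ.mulVec (fun i => |r i|) j)) (fun t => hxnn t j) (fun t => ?_) ?_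
    · rw [le_div_iff₀ hδ]
      have := hclow t j
      nlinarith [hclow t j]
    · have := hczero.div_const (s j - Eᵀ.mulVec (fun i => |r i|) j)
      simpa using this
  constructor
  · rw [tendsto_pi_nhds]
    intro j
    simpa using hxj j
  · have hpxlim : Tendsto (fun N => p ⬝ᵥ x N) atTop (nhds 0) := by
      have h7 : Tendsto (fun N => ∑ j, p j * x N j) atTop (nhds (∑ j : Fin n, p j * 0)) :=
        tendsto_finset_sum _ (fun j _ => (hxj j).const_mul (p j))
      simpa [dotProduct] using h7
    have h8 : Tendsto (fun N => p ⬝ᵥ x₀ - p ⬝ᵥ x N) atTop (nhds (p ⬝ᵥ x₀ - 0)) :=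
      tendsto_const_nhds.sub hpxlim
    have h9 := h8.congr (fun N => (hsum N).symm)
    simpa using h9
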